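/- Let F = (W, R, {S_w}) be an ILS-frame (generalized Veltman frame). The schema J4: A▷B → (◇A → ◇B) is valid in F if and only if for all x, y ∈ W and all V ⊆ W, y S_x V implies there exists z ∈ V with x R z. -/
import Mathlib


/-- Formulas of the language L(□,▷) of interpretability logic. -/
inductive Fml : Type
  | bot : Fml
  | var : ℕ → Fml
  | imp : Fml → Fml → Fml
  | box : Fml → Fml
  | rhd : Fml → Fml → Fml
  deriving DecidableEq

namespace Fml
def neg (A : Fml) : Fml := A.imp bot
def top : Fml := Fml.bot.imp Fml.bot
def or (A B : Fml) : Fml := A.neg.imp B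
def and (A B : Fml) : Fml := (A.imp B.neg).neg
def dia (A : Fml) : Fml := (A.neg.box).neg
end Fml

/-- A formula is a propositional tautology if every Boolean valuation that treats
⊥ and → classically (and is otherwise arbitrary on atoms, boxed and ▷-formulas)
makes it true. -/
def Taut (A : Fml) : Prop :=
  ∀ v : Fml → Bool, v Fml.bot = false →
    (∀ B C : Fml, v (B.imp C) = (!(v B) || v C)) → v A = true

/-- Provability in IL⁻ extended by an additional set `Ax` of axioms.
Axioms: G1 (tautologies), G2, G3 (Löb), J3, J6 (both directions);
rules: modus ponens, necessitation, R1 and R2. -/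
inductive ILMinus (Ax : Fml → Prop) : Fml → Prop
  | ax {A : Fml} : Ax A → ILMinus Ax A
  | taut {A : Fml} : Taut A → ILMinus Ax A
  | G2 (A B : Fml) : ILMinus Ax (((A.imp B).box).imp ((A.box).imp (B.box)))
  | G3 (A : Fml) : ILMinus Ax ((((A.box).imp A).box).imp (A.box))
  | J3 (A B C : Fml) : ILMinus Ax (((A.rhd C).and (B.rhd C)).imp ((A.or B).rhd C))
  | J6a (A : Fml) : ILMinus Ax ((A.box).imp ((A.neg).rhd Fml.bot))
  | J6b (A : Fml) : ILMinus Ax (((A.neg).rhd Fml.bot).imp (A.box))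
  | mp {A B : Fml} : ILMinus Ax (A.imp B) → ILMinus Ax A → ILMinus Ax B
  | nec {A : Fml} : ILMinus Ax A → ILMinus Ax (A.box)
  | R1 {A B : Fml} (C : Fml) :
      ILMinus Ax (A.imp B) → ILMinus Ax ((C.rhd A).imp (C.rhd B))
  | R2 {A B : Fml} (C : Fml) :
      ILMinus Ax (A.imp B) → ILMinus Ax ((B.rhd C).imp (A.rhd C))

/-- The axiom schema J1 : □(A→B) → A▷B. -/
def J1Ax : Fml → Prop := fun F => ∃ A B : Fml, F = ((A.imp B).box).imp (A.rhd B)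

/-- The axiom schema J2 : (A▷B)∧(B▷C) → A▷C. -/
def J2Ax : Fml → Prop := fun F => ∃ A B C : Fml, F = ((A.rhd B).and (B.rhd C)).imp (A.rhd C)

/-- The axiom schema J2₊ : (A▷(B∨C))∧(B▷C) → A▷C. -/
def J2plusAx : Fml → Prop :=
  fun F => ∃ A B C : Fml, F = ((A.rhd (B.or C)).and (B.rhd C)).imp (A.rhd C)

/-- The axiom schema J5 : ◇A ▷ A. -/
def J5Ax : Fml → Prop := fun F => ∃ A : Fml, F = (A.dia).rhd A

/-- An ILS-frame (generalized Veltman frame): W nonempty, R transitive and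
conversely well-founded, S_w ⊆ R[w] × (P(W) \ {∅}) monotone in the second
coordinate (here `S w x V` means x S_w V). -/
structure ILSFrame where
  W : Type
  R : W → W → Prop
  S : W → W → Set W → Prop
  ne : Nonempty W
  trans : Transitive R
  cwf : WellFounded (fun x y => R y x)
  S_dom : ∀ w x V, S w x V → R w x ∧ V.Nonempty
  mono : ∀ w x (V U : Set W), S w x V → V ⊆ U → S w x U

/-- Satisfaction over the data of an ILS-frame. -/
def SatS {W : Type} (R : W → W → Prop) (S : W → W → Set W → Prop)
    (V : W → ℕ → Prop) : W → Fml → Prop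
  | _, .bot => False
  | w, .var n => V w n
  | w, .imp A B => SatS R S V w A → SatS R S V w B
  | w, .box A => ∀ x, R w x → SatS R S V x A
  | w, .rhd A B => ∀ x, R w x → SatS R S V x A →
      ∃ U : Set W, S w x U ∧ ∀ y ∈ U, SatS R S V y B

/-- Validity in an ILS-frame. -/
def ValidS (F : ILSFrame) (A : Fml) : Prop :=
  ∀ (V : F.W → ℕ → Prop) (w : F.W), SatS F.R F.S V w A

/-- J4 : A▷B → (◇A → ◇B) is valid in an ILS-frame iff y S_x V implies
some z ∈ V with x R z. -/
theorem J4_valid_iff_ILS (F : ILSFrame) :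
    (∀ A B : Fml, ValidS F ((A.rhd B).imp ((A.dia).imp (B.dia)))) ↔
      ∀ (x y : F.W) (V : Set F.W), F.S x y V → ∃ z ∈ V, F.R x z := by
  constructor
  · intro h x y V hS
    by_contra hno
    push_neg at hno
    obtain ⟨hRxy, -⟩ := F.S_dom x y V hS
    have := h (Fml.var 0) (Fml.var 1)
      (fun w n => (n = 0 ∧ w = y) ∨ (n = 1 ∧ w ∈ V)) x
    simp only [Fml.dia, Fml.neg, SatS] at this
    apply this
    · intro z hRz hz
      rcases hz with ⟨-, rfl⟩ | ⟨h1, -⟩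
      · exact ⟨V, hS, fun u hu => Or.inr ⟨trivial, hu⟩⟩
      · exact nomatch h1
    · intro hall
      exact hall y hRxy (Or.inl ⟨trivial, rfl⟩)
    · intro z hRz hz
      rcases hz with ⟨h0, -⟩ | ⟨-, hz⟩
      · exact nomatch h0
      · exact hno z hz hRz
  · intro h A B Val w
    simp only [Fml.dia, Fml.neg, SatS]
    intro hrhd hdia hallB
    apply hdia
    intro x hRx hA
    obtain ⟨U, hSU, hB⟩ := hrhd x hRx hA
    obtain ⟨z, hzU, hRz⟩ := h w x U hSU
    exact (hallB z hRz (hB z hzU) : False).elim
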